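/- If Q is a subdivision of a partition P of [n+1], then ((ℝ^d)^n ∖ ν_Q) ∪ (ν_Q ∩ π_Q^{-1}(E_Q)) ⊆ ((ℝ^d)^n ∖ ν_P) ∪ (ν_P ∩ π_P^{-1}(E_P)). Equivalently, for every y ∈ ν_P with π_P(y) ∉ E_P, one has y ∈ ν_Q and π_Q(y) ∉ E_Q. -/

import Mathlib

open scoped BigOperators
open Finset

noncomputable section

namespace SinhaKnots

attribute [local instance] Classical.propDecidable

/-- `ℝ^d` with the Euclidean norm. -/
abbrev Rd (d : ℕ) := EuclideanSpace ℝ (Fin d)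

/-- `(ℝ^d)^m` with the Euclidean norm. -/
abbrev Vec (m d : ℕ) := PiLp 2 (fun _ : Fin m => Rd d)

/-- The first standard basis vector `u = (1,0,…,0)` of `ℝ^d`. -/
def uVec (d : ℕ) : Rd d := if h : 0 < d then EuclideanSpace.single ⟨0, h⟩ 1 else 0

/-- The second standard basis vector `v = (0,1,0,…,0)` of `ℝ^d`. -/
def vVec (d : ℕ) : Rd d := if h : 1 < d then EuclideanSpace.single ⟨1, h⟩ 1 else 0

/-- The first coordinate of a vector of `ℝ^d`. -/
def fst {d : ℕ} (x : Rd d) : ℝ := if h : 0 < d then x ⟨0, h⟩ else 0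

/-- A partition of `[n+1] = {0,1,…,n+1}` into (at least two) nonempty consecutive intervals,
encoded as a monotone surjection onto `Fin (p+2)`; the pieces are the fibers, totally
ordered via the index, and `p` is the number of non-extremal pieces. -/
structure IntervalPartition (n : ℕ) where
  p : ℕ
  toFun : Fin (n + 2) → Fin (p + 2)
  mono : Monotone toFun
  surj : Function.Surjective toFun

/-- `Q` is a subdivision of `P`: every piece of `Q` is contained in a piece of `P`,
and `Q ≠ P` (equivalently, `Q` has strictly more pieces). -/
def Subdivides {n : ℕ} (Q P : IntervalPartition n) : Prop :=
  (∀ i j, Q.toFun i = Q.toFun j → P.toFun i = P.toFun j) ∧ P.p < Q.p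

/-- The element `i+1` of `[n+1]`, corresponding to the `i`-th component of `(ℝ^d)^n`. -/
def elt (n : ℕ) (i : Fin n) : Fin (n + 2) := ⟨(i : ℕ) + 1, by omega⟩

/-- The finest partition of `[n+1]`, into singletons. -/
def finest (n : ℕ) : IntervalPartition n :=
  ⟨n, id, monotone_id, Function.surjective_id⟩

variable {n : ℕ}

/-- The piece of `P` with index `a`, as a finite set of elements of `[n+1]`. -/
def fiber (P : IntervalPartition n) (a : Fin (P.p + 2)) : Finset (Fin (n + 2)) :=
  Finset.univ.filter fun i => P.toFun i = a

lemma fiber_nonempty (P : IntervalPartition n) (a : Fin (P.p + 2)) : (fiber P a).Nonempty := by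
  obtain ⟨i, hi⟩ := P.surj a
  exact ⟨i, by simp [fiber, hi]⟩

/-- The minimal element of a piece. -/
def minElt (P : IntervalPartition n) (a : Fin (P.p + 2)) : Fin (n + 2) :=
  (fiber P a).min' (fiber_nonempty P a)

/-- The maximal element of a piece. -/
def maxElt (P : IntervalPartition n) (a : Fin (P.p + 2)) : Fin (n + 2) :=
  (fiber P a).max' (fiber_nonempty P a)

/-- `c_α = ∑_{i ∈ α} c_i`. -/
def cPiece (c : Fin (n + 2) → ℝ) (P : IntervalPartition n) (a : Fin (P.p + 2)) : ℝ :=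
  ∑ i ∈ fiber P a, c i

/-- `c_{≤α} = ∑_{γ < α} c_γ + c_α/2`. -/
def cLE (c : Fin (n + 2) → ℝ) (P : IntervalPartition n) (a : Fin (P.p + 2)) : ℝ :=
  (∑ i ∈ Finset.univ.filter fun i => P.toFun i < a, c i) + cPiece c P a / 2

/-- `c_{≥α} = ∑_{γ > α} c_γ + c_α/2`. -/
def cGE (c : Fin (n + 2) → ℝ) (P : IntervalPartition n) (a : Fin (P.p + 2)) : ℝ :=
  (∑ i ∈ Finset.univ.filter fun i => a < P.toFun i, c i) + cPiece c P a / 2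

/-- `c_{αβ} = ∑_{α < γ < β} c_γ + (c_α + c_β)/2`. -/
def cBetween (c : Fin (n + 2) → ℝ) (P : IntervalPartition n) (a b : Fin (P.p + 2)) : ℝ :=
  (∑ i ∈ Finset.univ.filter fun i => a < P.toFun i ∧ P.toFun i < b, c i)
    + (cPiece c P a + cPiece c P b) / 2

/-- The tuple `x` indexed by the non-extremal pieces, extended to all pieces by the fixed
values `x₀ = (-1+ρc_{α₀}/2)u` and `x_{p+1} = (1-ρc_{α_{p+1}}/2)u` on the extremal pieces. -/
def extTuple (ρ : ℝ) (c : Fin (n + 2) → ℝ) (P : IntervalPartition n) {d : ℕ}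
    (x : Vec P.p d) : Fin (P.p + 2) → Rd d := fun a =>
  if _h0 : (a : ℕ) = 0 then (-1 + ρ * cPiece c P 0 / 2) • uVec d
  else if _h1 : (a : ℕ) = P.p + 1 then
    (1 - ρ * cPiece c P (Fin.last (P.p + 1)) / 2) • uVec d
  else x ⟨(a : ℕ) - 1, by have := a.isLt; omega⟩

/-- The displacement (along `u`) of the center of the subsegment corresponding to the
`Q`-piece of `i` inside the segment of the `P`-piece of `i`, for a refinement `Q` of `P`. -/
def offsetQ (ρ : ℝ) (c : Fin (n + 2) → ℝ) (P Q : IntervalPartition n) (i : Fin (n + 2)) : ℝ :=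
  ρ * (- cPiece c P (P.toFun i) / 2
    + (∑ j ∈ Finset.univ.filter fun j => P.toFun j = P.toFun i ∧ Q.toFun j < Q.toFun i, c j)
    + cPiece c Q (Q.toFun i) / 2)

/-- The affine injection `e_{P,Q} : (ℝ^d)^p → (ℝ^d)^q` for a refinement `Q` of `P`. -/
def eMap (ρ : ℝ) (c : Fin (n + 2) → ℝ) (P Q : IntervalPartition n) {d : ℕ}
    (x : Vec P.p d) : Vec Q.p d := WithLp.toLp 2 (fun b =>
  extTuple ρ c P x (P.toFun (minElt Q (elt Q.p b)))
    + offsetQ ρ c P Q (minElt Q (elt Q.p b)) • uVec d)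

/-- The affine injection `e_P : (ℝ^d)^p → (ℝ^d)^n`. -/
def ePt (ρ : ℝ) (c : Fin (n + 2) → ℝ) (P : IntervalPartition n) {d : ℕ}
    (x : Vec P.p d) : Vec n d :=
  eMap ρ c P (finest n) x

/-- `ε_P = ε/8^{n-p}`. -/
def epsP (ε : ℝ) (P : IntervalPartition n) : ℝ := ε / 8 ^ (n - P.p)

/-- The open `ε_P`-neighborhood `ν_P` of `e_P((ℝ^d)^p)` in `(ℝ^d)^n`. -/
def nuP (ρ ε : ℝ) (c : Fin (n + 2) → ℝ) (P : IntervalPartition n) (d : ℕ) : Set (Vec n d) :=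
  {y | ∃ x : Vec P.p d, ‖y - ePt ρ c P x‖ < epsP ε P}

/-- The orthogonal projection `π_P : (ℝ^d)^n → (ℝ^d)^p`, i.e. the unique minimizer of
`x ↦ |y - e_P(x)|`; explicitly, its `α`-component is the average of `y_i - o_i u` over the
elements `i` of the piece `α`, where `o_i` is the offset of `i` in `e_P`. -/
def projP (ρ : ℝ) (c : Fin (n + 2) → ℝ) (P : IntervalPartition n) {d : ℕ}
    (y : Vec n d) : Vec P.p d := WithLp.toLp 2 (fun a =>
  ((Finset.univ.filter fun i : Fin n => P.toFun (elt n i) = elt P.p a).card : ℝ)⁻¹ •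
    ∑ i ∈ Finset.univ.filter fun i : Fin n => P.toFun (elt n i) = elt P.p a,
      (y i - offsetQ ρ c P (finest n) (elt n i) • uVec d))

/-- The component of a tuple `x ∈ (ℝ^d)^m` at a non-extremal vertex index `w` (and `0` at
the extremal indices, where there is no component). -/
def comp {m d : ℕ} (x : Vec m d) (w : Fin (m + 2)) : Rd d :=
  if h : 0 < (w : ℕ) ∧ (w : ℕ) < m + 1 then x ⟨(w : ℕ) - 1, by omega⟩ else 0

/-- `d_{αβ}(P) = ρ c_{αβ} - ε_P`. -/
def dBound (ρ ε : ℝ) (c : Fin (n + 2) → ℝ) (P : IntervalPartition n)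
    (a b : Fin (P.p + 2)) : ℝ :=
  ρ * cBetween c P a b - epsP ε P

/-- `D_{αβ} = {x : |x_α - x_β| ≤ d_{αβ}(P)}`. -/
def Dset (ρ ε : ℝ) (c : Fin (n + 2) → ℝ) (P : IntervalPartition n) (d : ℕ)
    (a b : Fin (P.p + 2)) : Set (Vec P.p d) :=
  {x | ‖comp x a - comp x b‖ ≤ dBound ρ ε c P a b}

/-- `E_α`. -/
def Eset (ρ ε : ℝ) (c : Fin (n + 2) → ℝ) (P : IntervalPartition n) (d : ℕ)
    (a : Fin (P.p + 2)) : Set (Vec P.p d) :=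
  {x | 1 - ρ * cPiece c P a / 2 + epsP ε P ≤ ‖comp x a‖
    ∨ fst (comp x a) ≤ -1 + ρ * cLE c P a - epsP ε P
    ∨ 1 - ρ * cGE c P a + epsP ε P ≤ fst (comp x a)}

/-- `E_P = ⋃_α E_α` over the non-extremal pieces `α`. -/
def EsetP (ρ ε : ℝ) (c : Fin (n + 2) → ℝ) (P : IntervalPartition n) (d : ℕ) :
    Set (Vec P.p d) :=
  ⋃ a ∈ {a : Fin (P.p + 2) | 0 < (a : ℕ) ∧ (a : ℕ) < P.p + 1}, Eset ρ ε c P d a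

/-- The configuration space `E(P) ⊂ (ℝ^d)^p`. -/
def Econf (ρ : ℝ) (c : Fin (n + 2) → ℝ) (P : IntervalPartition n) (d : ℕ) :
    Set (Vec P.p d) :=
  {x | (∀ w : Fin (P.p + 2), 0 < (w : ℕ) → (w : ℕ) < P.p + 1 →
          ‖comp x w‖ ≤ 1 - ρ * cPiece c P w / 2 ∧
          -1 + ρ * cLE c P w ≤ fst (comp x w) ∧
          fst (comp x w) ≤ 1 - ρ * cGE c P w) ∧
       ∀ w w' : Fin (P.p + 2), 0 < (w : ℕ) → (w' : ℕ) < P.p + 1 → w < w' →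
          ρ * cBetween c P w w' ≤ ‖comp x w - comp x w'‖}

/-! ### Graphs -/

/-- A graph on a partition with `m` non-extremal pieces: a finite set of edges, each being a
pair of vertices (vertices are the pieces, i.e. elements of `Fin (m+2)`). -/
abbrev GraphOn (m : ℕ) := Finset (Fin (m + 2) × Fin (m + 2))

/-- The edges go between non-extremal vertices and are increasing pairs. -/
def IsGraphOn {m : ℕ} (G : GraphOn m) : Prop :=
  ∀ e ∈ G, 0 < (e.1 : ℕ) ∧ e.1 < e.2 ∧ (e.2 : ℕ) < m + 1

/-- Adjacency relation of a graph. -/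
def adj {m : ℕ} (G : GraphOn m) (a b : Fin (m + 2)) : Prop :=
  ∃ e ∈ G, (e.1 = a ∧ e.2 = b) ∨ (e.1 = b ∧ e.2 = a)

/-- `conn G a b` : `a` and `b` lie in the same connected component of `G`. -/
def conn {m : ℕ} (G : GraphOn m) : Fin (m + 2) → Fin (m + 2) → Prop :=
  Relation.ReflTransGen (adj G)

/-- A vertex is discrete if no edge is incident with it. -/
def IsDiscrete {m : ℕ} (G : GraphOn m) (a : Fin (m + 2)) : Prop :=
  ∀ e ∈ G, e.1 ≠ a ∧ e.2 ≠ a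

lemma adj_symm {m : ℕ} (G : GraphOn m) : Symmetric (adj G) := by
  rintro a b ⟨e, he, h⟩
  exact ⟨e, he, h.symm⟩

/-- Being in the same connected component is an equivalence relation. -/
def connSetoid {m : ℕ} (G : GraphOn m) : Setoid (Fin (m + 2)) where
  r := conn G
  iseqv := by
    refine ⟨fun _ => Relation.ReflTransGen.refl, ?_, fun h h' => h.trans h'⟩
    intro x y h
    induction h with
    | refl => exact Relation.ReflTransGen.refl
    | tail _ hab ih => exact Relation.ReflTransGen.head (adj_symm G hab) ih

/-- The number of connected components of a graph (all `m+2` vertices included). -/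
def ncomp {m : ℕ} (G : GraphOn m) : ℕ := Fintype.card (Quotient (connSetoid G))

/-- `e` is a bridge of `G` if removing it increases the number of connected components. -/
def IsBridge {m : ℕ} (G : GraphOn m) (e : Fin (m + 2) × Fin (m + 2)) : Prop :=
  e ∈ G ∧ ncomp G < ncomp (G.erase e)

/-! ### Condensed maps -/

/-- The convex hull of `{f_j(x) : j ∈ α}`. -/
def hullPoints {d : ℕ} (P : IntervalPartition n) {X : Type*} (f : X → Vec n d) (x : X)
    (a : Fin (P.p + 2)) : Set (Rd d) :=
  convexHull ℝ {q | ∃ j : Fin n, P.toFun (elt n j) = a ∧ q = f x j}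

/-- `a` is a base (of its connected component of `G`) for the map `f`. -/
def IsBase {d : ℕ} (P : IntervalPartition n) (G : GraphOn P.p) {X : Type*}
    (f : X → Vec n d) (a : Fin (P.p + 2)) : Prop :=
  (∀ x : X, ∀ b, conn G a b → ∀ i : Fin n, P.toFun (elt n i) = b →
      f x i ∈ hullPoints P f x a)
  ∧ ∀ e ∈ G, conn G a e.1 → ¬(e.1 < a ∧ e.2 < a)

/-- A map `f : X → (ℝ^d)^n` is `G`-condensed: it is proper and each connected component
of `G` has a base. -/
def IsCondensed {d : ℕ} (P : IntervalPartition n) (G : GraphOn P.p) {X : Type*}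
    [TopologicalSpace X] (f : X → Vec n d) : Prop :=
  IsProperMap f ∧ ∀ a : Fin (P.p + 2), ∃ b, conn G a b ∧ IsBase P G f b

/-- `⋂_{(α,β) ∈ E(G)} D_{αβ}`. -/
def interD (ρ ε : ℝ) (c : Fin (n + 2) → ℝ) (P : IntervalPartition n) (d : ℕ)
    (G : GraphOn P.p) : Set (Vec P.p d) :=
  ⋂ e ∈ G, Dset ρ ε c P d e.1 e.2

/-- `U_G`. -/
def Uset (ρ ε : ℝ) (c : Fin (n + 2) → ℝ) (P : IntervalPartition n) (d : ℕ)
    (G : GraphOn P.p) : Set (Vec n d) :=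
  (nuP ρ ε c P d)ᶜ ∪ (projP ρ c P) ⁻¹' (interD ρ ε c P d G)

/-- Product of the projections to the first coordinate. -/
def p1 {m d : ℕ} (y : Vec m d) : Fin m → ℝ := fun i => fst (y i)

/-- `U_G^1`. -/
def Uset1 (ρ ε : ℝ) (c : Fin (n + 2) → ℝ) (P : IntervalPartition n) (d : ℕ)
    (G : GraphOn P.p) : Set (Vec n d) :=
  (p1 ⁻¹' (p1 '' nuP ρ ε c P d))ᶜ
    ∪ p1 ⁻¹' (p1 '' ((projP ρ c P) ⁻¹' (interD ρ ε c P d G)))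

/-! ### Contractions and homotopies -/

/-- The translation vector `A_e(s)` of the `e`-contraction. -/
def Acontr {d : ℕ} (P : IntervalPartition n) (G : GraphOn P.p)
    (e : Fin (P.p + 2) × Fin (P.p + 2)) (s : ℝ) : Vec n d := WithLp.toLp 2 (fun i =>
  if conn (G.erase e) (P.toFun (elt n i)) e.1 then s • vVec d
  else if conn (G.erase e) (P.toFun (elt n i)) e.2 then -(s • vVec d) else 0)

/-- The `e`-contraction `F(x,s) = f(x) + A_e(s)` of `f` for `G`. -/
def econtr {d : ℕ} (P : IntervalPartition n) (G : GraphOn P.p)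
    (e : Fin (P.p + 2) × Fin (P.p + 2)) {X : Type*} (f : X → Vec n d) :
    X × ↥(Set.Ici (0 : ℝ)) → Vec n d :=
  fun q => f q.1 + Acontr P G e (q.2 : ℝ)

/-- The `(e,e')`-contraction `F(x,s₁,s₂) = f(x) + A_e(s₁) + A_{e'}(s₂)` of `f` for `G`. -/
def eecontr {d : ℕ} (P : IntervalPartition n) (G : GraphOn P.p)
    (e e' : Fin (P.p + 2) × Fin (P.p + 2)) {X : Type*} (f : X → Vec n d) :
    X × ↥(Set.Ici (0 : ℝ)) × ↥(Set.Ici (0 : ℝ)) → Vec n d :=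
  fun q => f q.1 + Acontr P G e (q.2.1 : ℝ) + Acontr P G e' (q.2.2 : ℝ)

/-- The `(i,σ)`-contraction of a map `F` (σ = ±1): add `σsu` to the `i`-th component and
`-σsu` to the `(i+1)`-th component. Components are numbered `1,…,m` (the `k`-th coordinate
of `Vec m d` is component number `k+1`). -/
def icontr {m d : ℕ} {Y : Type*} (F : Y → Vec m d) (i : ℕ) (σ : ℝ) :
    Y × ↥(Set.Ici (0 : ℝ)) → Vec m d :=
  fun q => WithLp.toLp 2 (fun k => F q.1 k +
    (if (k : ℕ) + 1 = i then σ * (q.2 : ℝ)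
     else if (k : ℕ) + 1 = i + 1 then -(σ * (q.2 : ℝ)) else 0) • uVec d)

/-- The straight homotopy from `f` to `g`. -/
def straightH {V : Type*} [AddCommGroup V] [Module ℝ V] {Y : Type*} (f g : Y → V) :
    Y × ↥(Set.Icc (0 : ℝ) 1) → V :=
  fun q => (1 - (q.2 : ℝ)) • f q.1 + (q.2 : ℝ) • g q.1

/-! ### Merging pieces (the face operations δ) -/

/-- Value of the vertex map merging the pieces (0-based) `k` and `k+1`. -/
def vmapVal (m k : ℕ) (a : ℕ) : ℕ :=
  if m = 0 then a else min (if a ≤ k then a else a - 1) m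

/-- The vertex map of the merge, `Fin (m+2) → Fin (m-1+2)`. -/
def vmapFin (m k : ℕ) (a : Fin (m + 2)) : Fin (m - 1 + 2) :=
  ⟨vmapVal m k (a : ℕ), by have := a.isLt; unfold vmapVal; split <;> omega⟩

/-- The partition `δ_kP` obtained from `P` by uniting its `(k+1)`-th and `(k+2)`-th pieces
(i.e. the pieces of 0-based indices `k` and `k+1`). -/
def deltaPart (P : IntervalPartition n) (k : ℕ) : IntervalPartition n where
  p := P.p - 1
  toFun := fun i => vmapFin P.p k (P.toFun i)
  mono := by
    intro a b hab
    have h2 : (P.toFun a : ℕ) ≤ (P.toFun b : ℕ) := P.mono hab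
    simp only [vmapFin, Fin.mk_le_mk, vmapVal]
    split_ifs <;> omega
  surj := by
    intro b
    have hb := b.isLt
    by_cases h0 : P.p = 0
    · obtain ⟨i, hi⟩ := P.surj ⟨(b : ℕ), by omega⟩
      refine ⟨i, Fin.ext ?_⟩
      simp only [vmapFin, vmapVal, hi, h0, if_true]
    · rcases le_or_gt (b : ℕ) k with hbk | hbk
      · obtain ⟨i, hi⟩ := P.surj ⟨(b : ℕ), by omega⟩
        refine ⟨i, Fin.ext ?_⟩
        simp only [vmapFin, vmapVal, hi, h0, if_false]
        split_ifs <;> omega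
      · obtain ⟨i, hi⟩ := P.surj ⟨(b : ℕ) + 1, by omega⟩
        refine ⟨i, Fin.ext ?_⟩
        simp only [vmapFin, vmapVal, hi, h0, if_false]
        split_ifs <;> omega

/-- For a refinement pair (`Q` refines `P`): the piece of `P` containing a given piece of
`Q`. -/
def pieceMap (Q P : IntervalPartition n) : Fin (Q.p + 2) → Fin (P.p + 2) :=
  fun b => P.toFun (minElt Q b)

/-- The image graph on a coarser partition (e.g. `δ_iG` on `δ_iQ`). -/
def pushGraph (Q P : IntervalPartition n) (G : GraphOn Q.p) : GraphOn P.p :=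
  G.image fun e => (pieceMap Q P e.1, pieceMap Q P e.2)

/-- The image graph is an honest graph: no loops nor double edges are created
(injectivity of the edge map) and no edge is incident with an extremal piece. -/
def GoodPush (Q P : IntervalPartition n) (G : GraphOn Q.p) : Prop :=
  Set.InjOn (fun e : Fin (Q.p + 2) × Fin (Q.p + 2) => (pieceMap Q P e.1, pieceMap Q P e.2)) ↑G
  ∧ IsGraphOn (pushGraph Q P G)


section Basics

variable {n : ℕ}

lemma toFun_zero (P : IntervalPartition n) : P.toFun 0 = 0 := by
  obtain ⟨i, hi⟩ := P.surj 0
  have := P.mono (Fin.zero_le i)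
  rw [hi] at this
  exact Fin.le_zero_iff.mp this

lemma toFun_last (P : IntervalPartition n) :
    P.toFun (Fin.last (n + 1)) = Fin.last (P.p + 1) := by
  obtain ⟨i, hi⟩ := P.surj (Fin.last (P.p + 1))
  have := P.mono (Fin.le_last i)
  rw [hi] at this
  exact le_antisymm (Fin.le_last _) this

lemma p_le_n (P : IntervalPartition n) : P.p ≤ n := by
  have := Fintype.card_le_of_surjective P.toFun P.surj
  simpa using this

lemma toFun_minElt (P : IntervalPartition n) (a : Fin (P.p + 2)) :
    P.toFun (minElt P a) = a := by
  have := Finset.min'_mem (fiber P a) (fiber_nonempty P a)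
  simpa [fiber, minElt] using this

lemma minElt_le (P : IntervalPartition n) {a : Fin (P.p + 2)} {j : Fin (n + 2)}
    (h : P.toFun j = a) : minElt P a ≤ j :=
  Finset.min'_le _ _ (by simp [fiber, h])

lemma lt_of_toFun_lt (P : IntervalPartition n) {i j : Fin (n + 2)}
    (h : P.toFun i < P.toFun j) : i < j := by
  by_contra hc
  exact absurd (P.mono (not_lt.mp hc)) (not_le.mpr h)

lemma minElt_finest (t : Fin (n + 2)) : minElt (finest n) t = t := by
  have h1 := toFun_minElt (finest n) t
  exact h1

lemma cPiece_finest (c : Fin (n + 2) → ℝ) (t : Fin (n + 2)) :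
    cPiece c (finest n) t = c t := by
  unfold cPiece
  have : fiber (finest n) t = {t} := by
    ext j; unfold fiber; exact ⟨fun h => Finset.mem_singleton.mpr ((@Finset.mem_filter _ _ (_) _ _).mp h).2, fun h => (@Finset.mem_filter _ _ (_) _ _).mpr ⟨Finset.mem_univ _, Finset.mem_singleton.mp h⟩⟩
  rw [this, Finset.sum_singleton]

lemma elt_val_eq {m : ℕ} {b : Fin (m + 2)} (h0 : 0 < (b : ℕ)) (h1 : (b : ℕ) < m + 1) :
    elt m ⟨(b : ℕ) - 1, by omega⟩ = b := by
  apply Fin.ext; simp [elt]; omega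

lemma cPiece_pos {c : Fin (n + 2) → ℝ} (hc : ∀ i, 0 < c i) (P : IntervalPartition n)
    (a : Fin (P.p + 2)) : 0 < cPiece c P a :=
  Finset.sum_pos (fun i _ => hc i) (fiber_nonempty P a)

lemma cLE_add_cGE (c : Fin (n + 2) → ℝ) (P : IntervalPartition n) (a : Fin (P.p + 2)) :
    cLE c P a + cGE c P a = ∑ i, c i := by
  rw [cLE, cGE, cPiece]
  rw [fiber]
  simp only [Finset.sum_filter]
  have : ∀ x ∈ Finset.univ, ((if P.toFun x < a then c x else 0) + (if a < P.toFun x then c x else 0))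
      + ((if P.toFun x = a then c x else 0) / 2 + (if P.toFun x = a then c x else 0) / 2) = c x := by
    intro x _
    rcases lt_trichotomy (P.toFun x) a with h | h | h
    · simp [h, ne_of_lt h, not_lt.mpr (le_of_lt h)]
    · simp [h]
    · simp [h.ne', not_lt.mpr (le_of_lt h), h]
  have key : ∑ x : Fin (n+2), (((if P.toFun x < a then c x else 0) + (if a < P.toFun x then c x else 0))
      + ((if P.toFun x = a then c x else 0) / 2 + (if P.toFun x = a then c x else 0) / 2)) = ∑ x, c x :=
    Finset.sum_congr rfl this
  rw [Finset.sum_add_distrib, Finset.sum_add_distrib, Finset.sum_add_distrib, ← Finset.sum_div] at key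
  linarith [key]

lemma cLE_pos {c : Fin (n + 2) → ℝ} (hc : ∀ i, 0 < c i) (P : IntervalPartition n)
    (a : Fin (P.p + 2)) : 0 < cLE c P a := by
  have h2 := cPiece_pos hc P a
  have h1 : (0:ℝ) ≤ ∑ i ∈ Finset.univ.filter fun i => P.toFun i < a, c i :=
    Finset.sum_nonneg fun i _ => (hc i).le
  rw [cLE]; linarith

lemma cGE_pos {c : Fin (n + 2) → ℝ} (hc : ∀ i, 0 < c i) (P : IntervalPartition n)
    (a : Fin (P.p + 2)) : 0 < cGE c P a := by
  have h2 := cPiece_pos hc P a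
  have h1 : (0:ℝ) ≤ ∑ i ∈ Finset.univ.filter fun i => a < P.toFun i, c i :=
    Finset.sum_nonneg fun i _ => (hc i).le
  rw [cGE]; linarith

lemma cPiece_half_le_cLE {c : Fin (n + 2) → ℝ} (hc : ∀ i, 0 < c i) (P : IntervalPartition n)
    (a : Fin (P.p + 2)) : cPiece c P a / 2 ≤ cLE c P a := by
  have h1 : (0:ℝ) ≤ ∑ i ∈ Finset.univ.filter fun i => P.toFun i < a, c i :=
    Finset.sum_nonneg fun i _ => (hc i).le
  rw [cLE]; linarith

lemma cPiece_half_le_cGE {c : Fin (n + 2) → ℝ} (hc : ∀ i, 0 < c i) (P : IntervalPartition n)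
    (a : Fin (P.p + 2)) : cPiece c P a / 2 ≤ cGE c P a := by
  have h1 : (0:ℝ) ≤ ∑ i ∈ Finset.univ.filter fun i => a < P.toFun i, c i :=
    Finset.sum_nonneg fun i _ => (hc i).le
  rw [cGE]; linarith

end Basics
section Offsets

variable {n : ℕ} {P Q : IntervalPartition n}

lemma offsetQ_congr (ρ : ℝ) (c : Fin (n + 2) → ℝ) {i i' : Fin (n + 2)}
    (hP : P.toFun i = P.toFun i') (hQ : Q.toFun i = Q.toFun i') :
    offsetQ ρ c P Q i = offsetQ ρ c P Q i' := by
  rw [offsetQ, offsetQ, hP, hQ]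

lemma toFun_eq_zero_of (hsub : ∀ i j, Q.toFun i = Q.toFun j → P.toFun i = P.toFun j)
    {t : Fin (n + 2)} (hQt : Q.toFun t = 0) : P.toFun t = 0 := by
  have h := hsub t 0 (by rw [hQt, toFun_zero Q])
  rw [h, toFun_zero P]

lemma toFun_eq_last_of (hsub : ∀ i j, Q.toFun i = Q.toFun j → P.toFun i = P.toFun j)
    {t : Fin (n + 2)} (hQt : Q.toFun t = Fin.last (Q.p + 1)) :
    P.toFun t = Fin.last (P.p + 1) := by
  have h := hsub t (Fin.last (n + 1)) (by rw [hQt, toFun_last Q])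
  rw [h, toFun_last P]

lemma offset_decomp (ρ : ℝ) (c : Fin (n + 2) → ℝ)
    (hsub : ∀ i j, Q.toFun i = Q.toFun j → P.toFun i = P.toFun j) (t : Fin (n + 2)) :
    offsetQ ρ c P (finest n) t = offsetQ ρ c P Q t + offsetQ ρ c Q (finest n) t := by
  have hfin : ∀ j, (finest n).toFun j = j := fun j => rfl
  simp only [offsetQ, hfin, cPiece_finest]
  have hdisj : Disjoint
      (Finset.univ.filter fun j => P.toFun j = P.toFun t ∧ Q.toFun j < Q.toFun t)
      (Finset.univ.filter fun j => Q.toFun j = Q.toFun t ∧ j < t) := by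
    rw [Finset.disjoint_left]
    intro j h1 h2
    simp only [Finset.mem_filter] at h1 h2
    exact absurd h2.2.1 (ne_of_lt h1.2.2)
  have hset : (Finset.univ.filter fun j => P.toFun j = P.toFun t ∧ j < t)
      = (Finset.univ.filter fun j => P.toFun j = P.toFun t ∧ Q.toFun j < Q.toFun t)
        ∪ (Finset.univ.filter fun j => Q.toFun j = Q.toFun t ∧ j < t) := by
    ext j
    simp only [Finset.mem_filter, Finset.mem_union, Finset.mem_univ, true_and]
    constructor
    · rintro ⟨hP, hlt⟩
      rcases lt_or_eq_of_le (Q.mono hlt.le) with h | h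
      · exact Or.inl ⟨hP, h⟩
      · exact Or.inr ⟨h, hlt⟩
    · rintro (⟨hP, hlt⟩ | ⟨hQ, hlt⟩)
      · exact ⟨hP, lt_of_toFun_lt Q hlt⟩
      · exact ⟨hsub j t hQ, hlt⟩
  erw [hset, Finset.sum_union hdisj]
  ring!

lemma cLE_decomp (ρ : ℝ) (c : Fin (n + 2) → ℝ)
    (hsub : ∀ i j, Q.toFun i = Q.toFun j → P.toFun i = P.toFun j) (t : Fin (n + 2)) :
    ρ * cLE c Q (Q.toFun t) = ρ * cLE c P (P.toFun t) + offsetQ ρ c P Q t := by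
  simp only [cLE, offsetQ]
  have hdisj : Disjoint
      (Finset.univ.filter fun j => P.toFun j < P.toFun t)
      (Finset.univ.filter fun j => P.toFun j = P.toFun t ∧ Q.toFun j < Q.toFun t) := by
    rw [Finset.disjoint_left]
    intro j h1 h2
    simp only [Finset.mem_filter] at h1 h2
    exact absurd h2.2.1 (ne_of_lt h1.2)
  have hset : (Finset.univ.filter fun j => Q.toFun j < Q.toFun t)
      = (Finset.univ.filter fun j => P.toFun j < P.toFun t)
        ∪ (Finset.univ.filter fun j => P.toFun j = P.toFun t ∧ Q.toFun j < Q.toFun t) := by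
    ext j
    simp only [Finset.mem_filter, Finset.mem_union, Finset.mem_univ, true_and]
    constructor
    · intro hlt
      have hj : j < t := lt_of_toFun_lt Q hlt
      rcases lt_or_eq_of_le (P.mono hj.le) with h | h
      · exact Or.inl h
      · exact Or.inr ⟨h, hlt⟩
    · rintro (h | ⟨hP, hlt⟩)
      · have hj : j < t := lt_of_toFun_lt P h
        rcases lt_or_eq_of_le (Q.mono hj.le) with h' | h'
        · exact h'
        · exact absurd (hsub j t h') (ne_of_lt h)
      · exact hlt
  rw [hset, Finset.sum_union hdisj]
  ring

lemma cGE_decomp (ρ : ℝ) (c : Fin (n + 2) → ℝ)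
    (hsub : ∀ i j, Q.toFun i = Q.toFun j → P.toFun i = P.toFun j) (t : Fin (n + 2)) :
    ρ * cGE c Q (Q.toFun t) = ρ * cGE c P (P.toFun t) - offsetQ ρ c P Q t := by
  have h1 := cLE_decomp (P := P) (Q := Q) ρ c hsub t
  have h2 := cLE_add_cGE c P (P.toFun t)
  have h3 := cLE_add_cGE c Q (Q.toFun t)
  linear_combination ρ * h3 - ρ * h2 - h1

lemma hS_bounds {c : Fin (n + 2) → ℝ} (hc : ∀ i, 0 < c i)
    (hsub : ∀ i j, Q.toFun i = Q.toFun j → P.toFun i = P.toFun j) (t : Fin (n + 2)) :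
    0 ≤ (∑ j ∈ Finset.univ.filter fun j => P.toFun j = P.toFun t ∧ Q.toFun j < Q.toFun t, c j)
    ∧ (∑ j ∈ Finset.univ.filter fun j => P.toFun j = P.toFun t ∧ Q.toFun j < Q.toFun t, c j)
        + cPiece c Q (Q.toFun t) ≤ cPiece c P (P.toFun t) := by
  constructor
  · exact Finset.sum_nonneg fun i _ => (hc i).le
  · have hdisj : Disjoint
        (Finset.univ.filter fun j => P.toFun j = P.toFun t ∧ Q.toFun j < Q.toFun t)
        (fiber Q (Q.toFun t)) := by
      rw [Finset.disjoint_left]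
      intro j h1 h2
      simp only [Finset.mem_filter, fiber] at h1 h2
      exact absurd h2.2 (ne_of_lt h1.2.2)
    have hsubset : (Finset.univ.filter fun j => P.toFun j = P.toFun t ∧ Q.toFun j < Q.toFun t)
        ∪ fiber Q (Q.toFun t) ⊆ fiber P (P.toFun t) := by
      intro j hj
      simp only [Finset.mem_union, Finset.mem_filter, fiber, Finset.mem_univ, true_and] at hj ⊢
      rcases hj with h | h
      · exact h.1
      · exact hsub j t h
    have hle := Finset.sum_le_sum_of_subset_of_nonneg hsubset
      (fun i _ _ => (hc i).le) (f := c)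
    rw [Finset.sum_union hdisj] at hle
    exact hle

lemma offset_abs_le {ρ : ℝ} {c : Fin (n + 2) → ℝ} (hρ : 0 ≤ ρ) (hc : ∀ i, 0 < c i)
    (hsub : ∀ i j, Q.toFun i = Q.toFun j → P.toFun i = P.toFun j) (t : Fin (n + 2)) :
    |offsetQ ρ c P Q t| ≤ ρ * (cPiece c P (P.toFun t) - cPiece c Q (Q.toFun t)) / 2 := by
  obtain ⟨hS0, hS1⟩ := hS_bounds (P := P) (Q := Q) (c := c) hc hsub t
  rw [offsetQ, abs_le]
  constructor
  · nlinarith [mul_nonneg hρ hS0, mul_nonneg hρ (by linarith :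
      (0:ℝ) ≤ cPiece c P (P.toFun t) - (∑ j ∈ Finset.univ.filter fun j =>
        P.toFun j = P.toFun t ∧ Q.toFun j < Q.toFun t, c j) - cPiece c Q (Q.toFun t))]
  · nlinarith [mul_nonneg hρ hS0, mul_nonneg hρ (by linarith :
      (0:ℝ) ≤ cPiece c P (P.toFun t) - (∑ j ∈ Finset.univ.filter fun j =>
        P.toFun j = P.toFun t ∧ Q.toFun j < Q.toFun t, c j) - cPiece c Q (Q.toFun t))]

lemma offset_bot (ρ : ℝ) (c : Fin (n + 2) → ℝ) {t : Fin (n + 2)} (hQt : Q.toFun t = 0) :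
    offsetQ ρ c P Q t = ρ * (cPiece c Q (Q.toFun t) - cPiece c P (P.toFun t)) / 2 := by
  have hempty : (Finset.univ.filter fun j => P.toFun j = P.toFun t ∧ Q.toFun j < Q.toFun t)
      = ∅ := by
    ext j
    simp [hQt]
  rw [offsetQ, hempty, Finset.sum_empty]
  ring

lemma offset_top (ρ : ℝ) (c : Fin (n + 2) → ℝ)
    (hsub : ∀ i j, Q.toFun i = Q.toFun j → P.toFun i = P.toFun j)
    {t : Fin (n + 2)} (hQt : Q.toFun t = Fin.last (Q.p + 1)) :
    offsetQ ρ c P Q t = ρ * (cPiece c P (P.toFun t) - cPiece c Q (Q.toFun t)) / 2 := by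
  have hdisj : Disjoint
      (Finset.univ.filter fun j => P.toFun j = P.toFun t ∧ Q.toFun j < Q.toFun t)
      (fiber Q (Q.toFun t)) := by
    rw [Finset.disjoint_left]
    intro j h1 h2
    simp only [Finset.mem_filter, fiber] at h1 h2
    exact absurd h2.2 (ne_of_lt h1.2.2)
  have hset : fiber P (P.toFun t)
      = (Finset.univ.filter fun j => P.toFun j = P.toFun t ∧ Q.toFun j < Q.toFun t)
        ∪ fiber Q (Q.toFun t) := by
    ext j
    simp only [Finset.mem_filter, Finset.mem_union, fiber, Finset.mem_univ, true_and]
    constructor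
    · intro hP
      rcases lt_or_eq_of_le (by rw [hQt]; exact Fin.le_last _ : Q.toFun j ≤ Q.toFun t) with h | h
      · exact Or.inl ⟨hP, h⟩
      · exact Or.inr h
    · rintro (h | h)
      · exact h.1
      · exact hsub j t h
  have hsum : cPiece c P (P.toFun t)
      = (∑ j ∈ Finset.univ.filter fun j => P.toFun j = P.toFun t ∧ Q.toFun j < Q.toFun t, c j)
        + cPiece c Q (Q.toFun t) := by
    rw [cPiece, hset, Finset.sum_union hdisj]; rfl
  rw [offsetQ]
  rw [show (∑ j ∈ Finset.univ.filter fun j => P.toFun j = P.toFun t ∧ Q.toFun j < Q.toFun t, c j)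
      = cPiece c P (P.toFun t) - cPiece c Q (Q.toFun t) by linarith [hsum]]
  ring

end Offsets
section Comp

variable {n : ℕ} {P Q : IntervalPartition n}

lemma ePt_apply {d : ℕ} (ρ : ℝ) (c : Fin (n + 2) → ℝ) (P : IntervalPartition n)
    (x : Vec P.p d) (i : Fin n) :
    ePt ρ c P x i = extTuple ρ c P x (P.toFun (elt n i))
      + offsetQ ρ c P (finest n) (elt n i) • uVec d := by
  simp only [ePt, eMap, minElt_finest]
  erw [minElt_finest]; rfl

lemma extTuple_interior {d : ℕ} (ρ : ℝ) (c : Fin (n + 2) → ℝ) (P : IntervalPartition n)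
    {a : Fin (P.p + 2)} (h0 : 0 < (a : ℕ)) (h1 : (a : ℕ) < P.p + 1) (x : Vec P.p d) :
    extTuple ρ c P x a = x ⟨(a : ℕ) - 1, by have := a.isLt; omega⟩ := by
  rw [extTuple, dif_neg (by omega), dif_neg (by omega)]

lemma extTuple_zero {d : ℕ} (ρ : ℝ) (c : Fin (n + 2) → ℝ) (P : IntervalPartition n)
    {a : Fin (P.p + 2)} (h0 : (a : ℕ) = 0) (x : Vec P.p d) :
    extTuple ρ c P x a = (-1 + ρ * cPiece c P 0 / 2) • uVec d := by
  rw [extTuple, dif_pos h0]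

lemma extTuple_last {d : ℕ} (ρ : ℝ) (c : Fin (n + 2) → ℝ) (P : IntervalPartition n)
    {a : Fin (P.p + 2)} (h1 : (a : ℕ) = P.p + 1) (x : Vec P.p d) :
    extTuple ρ c P x a = (1 - ρ * cPiece c P (Fin.last (P.p + 1)) / 2) • uVec d := by
  rw [extTuple, dif_neg (by omega), dif_pos h1]

lemma comp_interior {m d : ℕ} (x : Vec m d) {w : Fin (m + 2)}
    (h0 : 0 < (w : ℕ)) (h1 : (w : ℕ) < m + 1) :
    comp x w = x ⟨(w : ℕ) - 1, by omega⟩ := by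
  rw [comp, dif_pos ⟨h0, h1⟩]

lemma ePt_comp {d : ℕ} (ρ : ℝ) (c : Fin (n + 2) → ℝ)
    (hsub : ∀ i j, Q.toFun i = Q.toFun j → P.toFun i = P.toFun j) (x : Vec P.p d) :
    ePt ρ c Q (eMap ρ c P Q x) = ePt ρ c P x := by
  refine PiLp.ext fun i => ?_
  rw [ePt_apply, ePt_apply]
  set t := elt n i with ht
  have hdec := offset_decomp (P := P) (Q := Q) ρ c hsub t
  rcases Nat.lt_trichotomy 0 ((Q.toFun t : ℕ)) with h0 | h0 | h0
  · rcases Nat.lt_trichotomy ((Q.toFun t : ℕ)) (Q.p + 1) with h1 | h1 | h1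
    · -- interior
      rw [extTuple_interior ρ c Q h0 h1]
      simp only [eMap]
      rw [elt_val_eq h0 h1]
      set i₀ := minElt Q (Q.toFun t) with hi₀
      have hQ : Q.toFun i₀ = Q.toFun t := toFun_minElt Q (Q.toFun t)
      have hP : P.toFun i₀ = P.toFun t := hsub i₀ t hQ
      rw [hP, offsetQ_congr ρ c hP hQ, hdec, add_smul]
      abel
    · -- last
      have hb : Q.toFun t = Fin.last (Q.p + 1) := Fin.ext h1
      have hP0 : P.toFun t = Fin.last (P.p + 1) := toFun_eq_last_of hsub hb
      rw [extTuple_last ρ c Q h1 (eMap ρ c P Q x), extTuple_last ρ c P (by rw [hP0]; rfl) x]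
      have htop := offset_top (P := P) ρ c hsub hb
      rw [hb, hP0] at htop
      rw [← add_smul, ← add_smul]
      congr 1
      linear_combination -hdec - htop
    · exact absurd (Q.toFun t).isLt (by omega)
  · -- zero
    have hb : Q.toFun t = 0 := Fin.ext h0.symm
    have hP0 : P.toFun t = 0 := toFun_eq_zero_of hsub hb
    rw [extTuple_zero ρ c Q (by rw [hb]; rfl) (eMap ρ c P Q x),
      extTuple_zero ρ c P (by rw [hP0]; rfl) x]
    have hbot := offset_bot (P := P) ρ c hb
    rw [hb, hP0] at hbot
    rw [← add_smul, ← add_smul]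
    congr 1
    linear_combination -hdec - hbot
  · omega

end Comp

section FstEps

lemma norm_apply_le {m d : ℕ} (x : Vec m d) (i : Fin m) : ‖x i‖ ≤ ‖x‖ := by
  have h := PiLp.norm_sq_eq_of_L2 (fun _ : Fin m => Rd d) x
  have h1 : ‖x i‖ ^ 2 ≤ ‖x‖ ^ 2 := by
    rw [h]
    exact Finset.single_le_sum (f := fun j => ‖x j‖ ^ 2) (fun j _ => sq_nonneg _)
      (Finset.mem_univ i)
  exact le_of_pow_le_pow_left₀ two_ne_zero (norm_nonneg _) h1

lemma fst_add {d : ℕ} (x y : Rd d) : fst (x + y) = fst x + fst y := by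
  rw [fst, fst, fst]
  split_ifs with h
  · rfl
  · ring

lemma fst_sub {d : ℕ} (x y : Rd d) : fst (x - y) = fst x - fst y := by
  rw [fst, fst, fst]
  split_ifs with h
  · rfl
  · ring

lemma fst_smul {d : ℕ} (r : ℝ) (x : Rd d) : fst (r • x) = r * fst x := by
  rw [fst, fst]
  split_ifs with h
  · rfl
  · ring

lemma fst_uVec {d : ℕ} (hd : 0 < d) : fst (uVec d) = 1 := by
  rw [fst, uVec, dif_pos hd, dif_pos hd, EuclideanSpace.single_apply, if_pos rfl]

lemma norm_uVec {d : ℕ} (hd : 0 < d) : ‖uVec d‖ = 1 := by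
  rw [uVec, dif_pos hd, EuclideanSpace.norm_single, norm_one]

lemma abs_fst_le {d : ℕ} (x : Rd d) : |fst x| ≤ ‖x‖ := by
  rw [fst]
  split_ifs with h
  · have h2 := PiLp.norm_sq_eq_of_L2 (fun _ : Fin d => ℝ) x
    have h1 : |x ⟨0, h⟩| ^ 2 ≤ ‖x‖ ^ 2 := by
      rw [h2]
      have := Finset.single_le_sum (f := fun j => ‖x j‖ ^ 2) (fun j _ => sq_nonneg _)
        (Finset.mem_univ (⟨0, h⟩ : Fin d))
      simpa [Real.norm_eq_abs] using this
    calc |x ⟨0, h⟩| = |(|x ⟨0, h⟩|)| := (abs_abs _).symm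
      _ ≤ ‖x‖ := le_of_pow_le_pow_left₀ two_ne_zero (norm_nonneg _) (by simpa using h1)
  · simpa using norm_nonneg x

variable {n : ℕ}

lemma epsP_pos {ε : ℝ} (hε : 0 < ε) (P : IntervalPartition n) : 0 < epsP ε P :=
  div_pos hε (pow_pos (by norm_num) _)

lemma epsP_le_quarter {ε : ℝ} (hε : 0 < ε) {P Q : IntervalPartition n}
    (hPQ : P.p < Q.p) : 4 * epsP ε P ≤ epsP ε Q := by
  have hQn : Q.p ≤ n := p_le_n Q
  have hexp : n - Q.p + 1 ≤ n - P.p := by omega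
  have h8 : (8:ℝ) ^ (n - Q.p + 1) ≤ 8 ^ (n - P.p) := by
    apply pow_le_pow_right₀ (by norm_num) hexp
  have hq : (0:ℝ) < 8 ^ (n - Q.p) := pow_pos (by norm_num) _
  have hp : (0:ℝ) < 8 ^ (n - P.p) := pow_pos (by norm_num) _
  rw [pow_succ] at h8
  rw [epsP, epsP, ← mul_div_assoc, div_le_div_iff₀ hp hq]
  nlinarith [mul_le_mul_of_nonneg_left h8 hε.le]
  
end FstEps
section Proj

open scoped RealInnerProductSpace

lemma mean_identity {F : Type*} [NormedAddCommGroup F] [InnerProductSpace ℝ F]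
    {ι : Type*} (s : Finset ι) (hs : s.Nonempty) (z : ι → F) (v : F) :
    ∑ i ∈ s, ‖z i - v‖ ^ 2
      = (∑ i ∈ s, ‖z i - (s.card : ℝ)⁻¹ • ∑ j ∈ s, z j‖ ^ 2)
        + (s.card : ℝ) * ‖(s.card : ℝ)⁻¹ • (∑ j ∈ s, z j) - v‖ ^ 2 := by
  set m := (s.card : ℝ)⁻¹ • ∑ j ∈ s, z j with hm
  have hcard : (s.card : ℝ) ≠ 0 := (Nat.cast_pos.mpr hs.card_pos).ne'
  have hzero : ∑ i ∈ s, (z i - m) = 0 := by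
    rw [Finset.sum_sub_distrib, Finset.sum_const, hm, ← Nat.cast_smul_eq_nsmul ℝ,
      smul_smul, mul_inv_cancel₀ hcard, one_smul, sub_self]
  have key : ∀ i, ‖z i - v‖ ^ 2 = ‖z i - m‖ ^ 2 + 2 * ⟪z i - m, m - v⟫ + ‖m - v‖ ^ 2 := by
    intro i
    have h : z i - v = (z i - m) + (m - v) := by abel
    rw [h, norm_add_sq_real]
  calc ∑ i ∈ s, ‖z i - v‖ ^ 2
      = ∑ i ∈ s, (‖z i - m‖ ^ 2 + 2 * ⟪z i - m, m - v⟫ + ‖m - v‖ ^ 2) :=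
        Finset.sum_congr rfl fun i _ => key i
    _ = (∑ i ∈ s, ‖z i - m‖ ^ 2) + 2 * ⟪∑ i ∈ s, (z i - m), m - v⟫
        + (s.card : ℝ) * ‖m - v‖ ^ 2 := by
        rw [Finset.sum_add_distrib, Finset.sum_add_distrib, Finset.sum_const,
          nsmul_eq_mul, ← Finset.mul_sum, ← sum_inner]
    _ = _ := by rw [hzero, inner_zero_left]; ring

variable {n : ℕ}

lemma elt_index_eq {m : ℕ} (a : Fin m) :
    (⟨((elt m a : Fin (m + 2)) : ℕ) - 1, by have := a.isLt; simp [elt]⟩ : Fin m) = a := by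
  apply Fin.ext; simp [elt]

lemma sFiber_nonempty (R : IntervalPartition n) (a : Fin R.p) :
    (Finset.univ.filter fun i : Fin n => R.toFun (elt n i) = elt R.p a).Nonempty := by
  obtain ⟨t, ht⟩ := R.surj (elt R.p a)
  have hane : 0 < ((elt R.p a : Fin (R.p + 2)) : ℕ) ∧ ((elt R.p a : Fin (R.p + 2)) : ℕ) < R.p + 1 := by
    have := a.isLt; simp [elt]
  have h0 : (t : ℕ) ≠ 0 := by
    intro h
    have : t = 0 := Fin.ext h
    rw [this, toFun_zero R] at ht
    have := congrArg (fun x : Fin (R.p + 2) => (x : ℕ)) ht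
    simp at this
    omega
  have h1 : (t : ℕ) ≠ n + 1 := by
    intro h
    have : t = Fin.last (n + 1) := Fin.ext h
    rw [this, toFun_last R] at ht
    have := congrArg (fun x : Fin (R.p + 2) => (x : ℕ)) ht
    simp [Fin.last] at this
    omega
  have htlt := t.isLt
  refine ⟨⟨(t : ℕ) - 1, by omega⟩, ?_⟩
  simp only [Finset.mem_filter, Finset.mem_univ, true_and]
  have : elt n ⟨(t : ℕ) - 1, by omega⟩ = t := by
    apply Fin.ext; simp [elt]; omega
  rw [this]; exact ht

lemma normsq_split {d : ℕ} (ρ : ℝ) (c : Fin (n + 2) → ℝ) (R : IntervalPartition n)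
    (y : Vec n d) (v : Vec R.p d) :
    ‖y - ePt ρ c R v‖ ^ 2 = ‖y - ePt ρ c R (projP ρ c R y)‖ ^ 2
      + ∑ a : Fin R.p,
          ((Finset.univ.filter fun i : Fin n => R.toFun (elt n i) = elt R.p a).card : ℝ)
            * ‖projP ρ c R y a - v a‖ ^ 2 := by
  have hnorm : ∀ w : Vec R.p d, ‖y - ePt ρ c R w‖ ^ 2
      = ∑ b : Fin (R.p + 2), ∑ i ∈ Finset.univ.filter fun i : Fin n => R.toFun (elt n i) = b,
          ‖y i - ePt ρ c R w i‖ ^ 2 := by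
    intro w
    rw [PiLp.norm_sq_eq_of_L2]
    rw [Finset.sum_fiberwise Finset.univ (fun i : Fin n => R.toFun (elt n i))
      (fun i => ‖y i - ePt ρ c R w i‖ ^ 2)]
    simp only [PiLp.sub_apply]
  -- inner sums for interior pieces
  have hinner : ∀ w : Vec R.p d, ∀ a : Fin R.p,
      (∑ i ∈ Finset.univ.filter fun i : Fin n => R.toFun (elt n i) = elt R.p a,
        ‖y i - ePt ρ c R w i‖ ^ 2)
      = ∑ i ∈ Finset.univ.filter fun i : Fin n => R.toFun (elt n i) = elt R.p a,
          ‖(y i - offsetQ ρ c R (finest n) (elt n i) • uVec d) - w a‖ ^ 2 := by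
    intro w a
    apply Finset.sum_congr rfl
    intro i hi
    simp only [Finset.mem_filter, Finset.mem_univ, true_and] at hi
    have hane : 0 < ((elt R.p a : Fin (R.p + 2)) : ℕ)
        ∧ ((elt R.p a : Fin (R.p + 2)) : ℕ) < R.p + 1 := by
      have := a.isLt; simp [elt]
    rw [ePt_apply, hi, extTuple_interior ρ c R hane.1 hane.2, elt_index_eq]
    congr 1
    abel_nf
  have hone : ∀ b : Fin (R.p + 2), (b : ℕ) = 0 ∨ (b : ℕ) = R.p + 1 →
      ∀ w w' : Vec R.p d,
      (∑ i ∈ Finset.univ.filter fun i : Fin n => R.toFun (elt n i) = b,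
        ‖y i - ePt ρ c R w i‖ ^ 2)
      = ∑ i ∈ Finset.univ.filter fun i : Fin n => R.toFun (elt n i) = b,
          ‖y i - ePt ρ c R w' i‖ ^ 2 := by
    intro b hb w w'
    apply Finset.sum_congr rfl
    intro i hi
    simp only [Finset.mem_filter, Finset.mem_univ, true_and] at hi
    rcases hb with hb | hb
    · rw [ePt_apply, ePt_apply, hi, extTuple_zero ρ c R hb, extTuple_zero ρ c R hb]
    · rw [ePt_apply, ePt_apply, hi, extTuple_last ρ c R hb, extTuple_last ρ c R hb]
  -- split the outer sum into 0, interior, last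
  have hsplit : ∀ g : Fin (R.p + 2) → ℝ, ∑ b : Fin (R.p + 2), g b
      = g 0 + (∑ a : Fin R.p, g (elt R.p a)) + g (Fin.last (R.p + 1)) := by
    intro g
    rw [Fin.sum_univ_succ, Fin.sum_univ_castSucc]
    have h1 : ∀ a : Fin R.p, (a.castSucc).succ = elt R.p a := by
      intro a; apply Fin.ext; simp [elt]
    have h2 : (Fin.last R.p).succ = Fin.last (R.p + 1) := by
      apply Fin.ext; simp [Fin.last]
    simp only [h1, h2]
    ring
  rw [hnorm v, hnorm (projP ρ c R y), hsplit, hsplit]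
  rw [hone 0 (Or.inl rfl) v (projP ρ c R y),
    hone (Fin.last (R.p + 1)) (Or.inr (by simp [Fin.last])) v (projP ρ c R y)]
  have hmid : (∑ a : Fin R.p, ∑ i ∈ Finset.univ.filter fun i : Fin n =>
        R.toFun (elt n i) = elt R.p a, ‖y i - ePt ρ c R v i‖ ^ 2)
      = (∑ a : Fin R.p, ∑ i ∈ Finset.univ.filter fun i : Fin n =>
          R.toFun (elt n i) = elt R.p a, ‖y i - ePt ρ c R (projP ρ c R y) i‖ ^ 2)
        + ∑ a : Fin R.p,
            ((Finset.univ.filter fun i : Fin n => R.toFun (elt n i) = elt R.p a).card : ℝ)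
              * ‖projP ρ c R y a - v a‖ ^ 2 := by
    rw [← Finset.sum_add_distrib]
    apply Finset.sum_congr rfl
    intro a _
    rw [hinner v a, hinner (projP ρ c R y) a]
    have hproj : projP ρ c R y a
        = ((Finset.univ.filter fun i : Fin n => R.toFun (elt n i) = elt R.p a).card : ℝ)⁻¹
          • ∑ i ∈ Finset.univ.filter fun i : Fin n => R.toFun (elt n i) = elt R.p a,
              (y i - offsetQ ρ c R (finest n) (elt n i) • uVec d) := rfl
    rw [mean_identity _ (sFiber_nonempty R a)
      (fun i => y i - offsetQ ρ c R (finest n) (elt n i) • uVec d) (v a)]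
    rw [mean_identity _ (sFiber_nonempty R a)
      (fun i => y i - offsetQ ρ c R (finest n) (elt n i) • uVec d) (projP ρ c R y a)]
    rw [← hproj, sub_self, norm_zero]
    ring
  linarith [hmid]
end Proj
section Main

variable {n : ℕ}

lemma dist_ePt_proj_le {d : ℕ} (ρ : ℝ) (c : Fin (n + 2) → ℝ) (R : IntervalPartition n)
    (y : Vec n d) (v : Vec R.p d) :
    ‖y - ePt ρ c R (projP ρ c R y)‖ ≤ ‖y - ePt ρ c R v‖ := by
  have h := normsq_split ρ c R y v
  have hnn : 0 ≤ ∑ a : Fin R.p,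
      ((Finset.univ.filter fun i : Fin n => R.toFun (elt n i) = elt R.p a).card : ℝ)
        * ‖projP ρ c R y a - v a‖ ^ 2 :=
    Finset.sum_nonneg fun a _ => mul_nonneg (Nat.cast_nonneg _) (sq_nonneg _)
  have : ‖y - ePt ρ c R (projP ρ c R y)‖ ^ 2 ≤ ‖y - ePt ρ c R v‖ ^ 2 := by linarith
  exact le_of_pow_le_pow_left₀ two_ne_zero (norm_nonneg _) this

lemma dist_proj_le {d : ℕ} (ρ : ℝ) (c : Fin (n + 2) → ℝ) (R : IntervalPartition n)
    (y : Vec n d) (v : Vec R.p d) :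
    ‖projP ρ c R y - v‖ ≤ ‖y - ePt ρ c R v‖ := by
  have h := normsq_split ρ c R y v
  have h2 : ‖projP ρ c R y - v‖ ^ 2 = ∑ a : Fin R.p, ‖projP ρ c R y a - v a‖ ^ 2 := by
    rw [PiLp.norm_sq_eq_of_L2]
    simp only [PiLp.sub_apply]
  have hle : ∑ a : Fin R.p, ‖projP ρ c R y a - v a‖ ^ 2
      ≤ ∑ a : Fin R.p,
        ((Finset.univ.filter fun i : Fin n => R.toFun (elt n i) = elt R.p a).card : ℝ)
          * ‖projP ρ c R y a - v a‖ ^ 2 := by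
    apply Finset.sum_le_sum
    intro a _
    have hcard : 1 ≤ ((Finset.univ.filter fun i : Fin n =>
        R.toFun (elt n i) = elt R.p a).card : ℝ) := by
      have := (sFiber_nonempty R a).card_pos
      exact_mod_cast this
    nlinarith [sq_nonneg ‖projP ρ c R y a - v a‖]
  have hsq : ‖projP ρ c R y - v‖ ^ 2 ≤ ‖y - ePt ρ c R v‖ ^ 2 := by
    have hnn : 0 ≤ ‖y - ePt ρ c R (projP ρ c R y)‖ ^ 2 := sq_nonneg _
    linarith
  exact le_of_pow_le_pow_left₀ two_ne_zero (norm_nonneg _) hsq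

lemma cLE_zero (c : Fin (n + 2) → ℝ) (P : IntervalPartition n) :
    cLE c P 0 = cPiece c P 0 / 2 := by
  rw [cLE]
  have h : (Finset.univ.filter fun j : Fin (n + 2) => P.toFun j < 0) = ∅ := by
    ext j; simp
  rw [h, Finset.sum_empty, zero_add]

lemma cGE_last (c : Fin (n + 2) → ℝ) (P : IntervalPartition n) :
    cGE c P (Fin.last (P.p + 1)) = cPiece c P (Fin.last (P.p + 1)) / 2 := by
  rw [cGE]
  have h : (Finset.univ.filter fun j : Fin (n + 2) => Fin.last (P.p + 1) < P.toFun j) = ∅ := by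
    ext j
    simp only [Finset.mem_filter, Finset.mem_univ, true_and, Finset.notMem_empty, iff_false]
    exact not_lt.mpr (Fin.le_last _)
  rw [h, Finset.sum_empty, zero_add]

set_option maxHeartbeats 1000000 in
lemma key_lemma {d : ℕ} (hd : 1 ≤ d) {ρ ε : ℝ} {c : Fin (n + 2) → ℝ}
    (hρ0 : 0 < ρ) (hρ1 : ρ < 1) (hε0 : 0 < ε) (hc : ∀ i, 0 < c i)
    (hsum : ∑ i, c i = 1) {P Q : IntervalPartition n} (hQP : Subdivides Q P)
    (y : Vec n d) (hP : y ∈ nuP ρ ε c P d) (hE : projP ρ c P y ∉ EsetP ρ ε c P d) :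
    y ∈ nuP ρ ε c Q d ∧ projP ρ c Q y ∉ EsetP ρ ε c Q d := by
  obtain ⟨hsub, hpq⟩ := hQP
  have hd0 : 0 < d := hd
  obtain ⟨x, hx⟩ := hP
  set x' := projP ρ c P y with hx'def
  set z' := eMap ρ c P Q x' with hz'def
  have hcomp : ePt ρ c Q z' = ePt ρ c P x' := ePt_comp ρ c hsub x'
  have h1 : ‖y - ePt ρ c P x'‖ ≤ ‖y - ePt ρ c P x‖ := dist_ePt_proj_le ρ c P y x
  have hη : ‖y - ePt ρ c Q z'‖ < epsP ε P := by
    rw [hcomp]; exact h1.trans_lt hx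
  have heps4 : 4 * epsP ε P ≤ epsP ε Q := epsP_le_quarter hε0 hpq
  have hepsP := epsP_pos hε0 P
  have hepsQ := epsP_pos hε0 Q
  refine ⟨⟨z', hη.trans_le (by linarith)⟩, ?_⟩
  have h4 : ‖projP ρ c Q y - z'‖ < epsP ε P :=
    lt_of_le_of_lt (dist_proj_le ρ c Q y z') hη
  intro hEQ
  simp only [EsetP, Eset, Set.mem_iUnion, Set.mem_setOf_eq] at hEQ
  obtain ⟨b, ⟨hb0, hb1⟩, hbE⟩ := hEQ
  simp only [EsetP, Eset, Set.mem_iUnion, Set.mem_setOf_eq, not_exists, not_or] at hE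
  push_neg at hE
  -- setup
  set β : Fin Q.p := ⟨(b : ℕ) - 1, by omega⟩ with hβdef
  set t₀ := minElt Q b with ht₀def
  have hQt : Q.toFun t₀ = b := toFun_minElt Q b
  have hg : comp (projP ρ c Q y) b = projP ρ c Q y β := comp_interior _ hb0 hb1
  have hz'β : z' β = extTuple ρ c P x' (P.toFun t₀) + offsetQ ρ c P Q t₀ • uVec d := by
    rw [hz'def]
    show extTuple ρ c P x' (P.toFun (minElt Q (elt Q.p β)))
      + offsetQ ρ c P Q (minElt Q (elt Q.p β)) • uVec d = _
    rw [hβdef, elt_val_eq hb0 hb1, ← ht₀def]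
  have hco : ‖projP ρ c Q y β - z' β‖ < epsP ε P := by
    have hcc := norm_apply_le (projP ρ c Q y - z') β
    rw [PiLp.sub_apply] at hcc
    exact lt_of_le_of_lt hcc h4
  set g := projP ρ c Q y β with hgdef
  have hgnorm : ‖g‖ ≤ ‖z' β‖ + epsP ε P := by
    have : g = z' β + (g - z' β) := by abel
    calc ‖g‖ = ‖z' β + (g - z' β)‖ := by rw [← this]
      _ ≤ ‖z' β‖ + ‖g - z' β‖ := norm_add_le _ _
      _ ≤ ‖z' β‖ + epsP ε P := by linarith [hco]
  have hfstd : |fst g - fst (z' β)| ≤ epsP ε P := by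
    rw [← fst_sub]
    exact (abs_fst_le _).trans hco.le
  have hLE : ρ * cLE c Q b = ρ * cLE c P (P.toFun t₀) + offsetQ ρ c P Q t₀ := by
    have h := cLE_decomp (P := P) (Q := Q) ρ c hsub t₀
    rw [hQt] at h; exact h
  have hGE : ρ * cGE c Q b = ρ * cGE c P (P.toFun t₀) - offsetQ ρ c P Q t₀ := by
    have h := cGE_decomp (P := P) (Q := Q) ρ c hsub t₀
    rw [hQt] at h; exact h
  have hsumQ : cLE c Q b + cGE c Q b = 1 := by
    rw [cLE_add_cGE, hsum]
  have hLEpos := cLE_pos hc Q b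
  have hGEpos := cGE_pos hc Q b
  have hhalfLE := cPiece_half_le_cLE hc Q b
  have hhalfGE := cPiece_half_le_cGE hc Q b
  have hmulLE : ρ * (cPiece c Q b / 2) ≤ ρ * cLE c Q b :=
    mul_le_mul_of_nonneg_left hhalfLE hρ0.le
  have hmulGE : ρ * (cPiece c Q b / 2) ≤ ρ * cGE c Q b :=
    mul_le_mul_of_nonneg_left hhalfGE hρ0.le
  have hmulsum : ρ * cLE c Q b + ρ * cGE c Q b = ρ := by
    linear_combination ρ * hsumQ
  have hLEmul_pos : 0 < ρ * cLE c Q b := mul_pos hρ0 hLEpos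
  have hGEmul_pos : 0 < ρ * cGE c Q b := mul_pos hρ0 hGEpos
  -- the three strict bounds
  have main : ‖g‖ < 1 - ρ * cPiece c Q b / 2 + epsP ε Q
      ∧ (-1 + ρ * cLE c Q b - epsP ε Q < fst g)
      ∧ (fst g < 1 - ρ * cGE c Q b + epsP ε Q) := by
    rcases Nat.lt_trichotomy 0 ((P.toFun t₀ : ℕ)) with ha0 | ha0 | ha0
    · rcases Nat.lt_trichotomy ((P.toFun t₀ : ℕ)) (P.p + 1) with ha1 | ha1 | ha1
      · -- interior
        have hext : extTuple ρ c P x' (P.toFun t₀) = comp x' (P.toFun t₀) := by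
          rw [extTuple_interior ρ c P ha0 ha1, comp_interior x' ha0 ha1]
        obtain ⟨hEa1, hEa2, hEa3⟩ := hE (P.toFun t₀) ⟨ha0, ha1⟩
        have ho := offset_abs_le (P := P) (Q := Q) hρ0.le hc hsub t₀
        rw [hQt] at ho
        have habs := abs_le.mp ho
        have hfstz : fst (z' β) = fst (comp x' (P.toFun t₀)) + offsetQ ρ c P Q t₀ := by
          rw [hz'β, hext, fst_add, fst_smul, fst_uVec hd0, mul_one]
        have hnormz : ‖z' β‖ ≤ ‖comp x' (P.toFun t₀)‖ + |offsetQ ρ c P Q t₀| := by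
          rw [hz'β, hext]
          calc ‖comp x' (P.toFun t₀) + offsetQ ρ c P Q t₀ • uVec d‖
              ≤ ‖comp x' (P.toFun t₀)‖ + ‖offsetQ ρ c P Q t₀ • uVec d‖ := norm_add_le _ _
            _ = ‖comp x' (P.toFun t₀)‖ + |offsetQ ρ c P Q t₀| := by
                rw [norm_smul, Real.norm_eq_abs, norm_uVec hd0, mul_one]
        have habsf := abs_le.mp hfstd
        refine ⟨?_, ?_, ?_⟩
        · linarith
        · linarith
        · linarith
      · -- last
        have halast : P.toFun t₀ = Fin.last (P.p + 1) := Fin.ext ha1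
        have hext : extTuple ρ c P x' (P.toFun t₀)
            = (1 - ρ * cPiece c P (Fin.last (P.p + 1)) / 2) • uVec d :=
          extTuple_last ρ c P ha1 x'
        have hzr : z' β = (1 - ρ * cPiece c P (Fin.last (P.p + 1)) / 2
            + offsetQ ρ c P Q t₀) • uVec d := by
          rw [hz'β, hext, ← add_smul]
        have hGEP : cGE c P (P.toFun t₀) = cPiece c P (Fin.last (P.p + 1)) / 2 := by
          rw [halast, cGE_last]
        have hr : 1 - ρ * cPiece c P (Fin.last (P.p + 1)) / 2 + offsetQ ρ c P Q t₀
            = 1 - ρ * cGE c Q b := by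
          rw [hGEP] at hGE
          linarith [hGE]
        rw [hr] at hzr
        have hfstz : fst (z' β) = 1 - ρ * cGE c Q b := by
          rw [hzr, fst_smul, fst_uVec hd0, mul_one]
        have hnormz : ‖z' β‖ = |1 - ρ * cGE c Q b| := by
          rw [hzr, norm_smul, Real.norm_eq_abs, norm_uVec hd0, mul_one]
        have habs : |1 - ρ * cGE c Q b| = 1 - ρ * cGE c Q b := by
          rw [abs_of_pos]; nlinarith
        have habsf := abs_le.mp hfstd
        refine ⟨?_, ?_, ?_⟩
        · rw [hnormz, habs] at hgnorm; linarith
        · linarith [hfstz]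
        · linarith [hfstz]
      · exact absurd (P.toFun t₀).isLt (by omega)
    · -- zero
      have hazero : P.toFun t₀ = 0 := Fin.ext ha0.symm
      have hext : extTuple ρ c P x' (P.toFun t₀)
          = (-1 + ρ * cPiece c P 0 / 2) • uVec d :=
        extTuple_zero ρ c P ha0.symm x'
      have hzr : z' β = (-1 + ρ * cPiece c P 0 / 2 + offsetQ ρ c P Q t₀) • uVec d := by
        rw [hz'β, hext, ← add_smul]
      have hLEP : cLE c P (P.toFun t₀) = cPiece c P 0 / 2 := by
        rw [hazero, cLE_zero]
      have hr : -1 + ρ * cPiece c P 0 / 2 + offsetQ ρ c P Q t₀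
          = -1 + ρ * cLE c Q b := by
        rw [hLEP] at hLE
        linarith [hLE]
      rw [hr] at hzr
      have hfstz : fst (z' β) = -1 + ρ * cLE c Q b := by
        rw [hzr, fst_smul, fst_uVec hd0, mul_one]
      have hnormz : ‖z' β‖ = |(-1 + ρ * cLE c Q b)| := by
        rw [hzr, norm_smul, Real.norm_eq_abs, norm_uVec hd0, mul_one]
      have habs : |(-1 + ρ * cLE c Q b)| = 1 - ρ * cLE c Q b := by
        rw [abs_of_neg]; · ring
        nlinarith
      have habsf := abs_le.mp hfstd
      refine ⟨?_, ?_, ?_⟩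
      · rw [hnormz, habs] at hgnorm; linarith
      · linarith [hfstz]
      · linarith [hfstz]
    · omega
  rw [hg] at hbE
  rcases hbE with h | h | h
  · linarith [main.1]
  · linarith [main.2.1]
  · linarith [main.2.2]

end Main
/-- if `Q` is a subdivision of `P` then
`((ℝ^d)^n ∖ ν_Q) ∪ (ν_Q ∩ π_Q⁻¹(E_Q)) ⊆ ((ℝ^d)^n ∖ ν_P) ∪ (ν_P ∩ π_P⁻¹(E_P))`. -/
theorem statement_3
    (n d : ℕ) (hn : 1 ≤ n) (hd : 1 ≤ d) (ρ ε : ℝ) (c : Fin (n + 2) → ℝ)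
    (hρ0 : 0 < ρ) (hρ1 : ρ < 1) (hε0 : 0 < ε) (hc : ∀ i, 0 < c i)
    (hsum : ∑ i, c i = 1) (hc0 : 100 * ε / ρ < c 0)
    (hci : ∀ i : Fin (n + 2), 1 ≤ (i : ℕ) →
      100 * (ε / ρ + ∑ j ∈ Finset.univ.filter (fun j : Fin (n + 2) => (j : ℕ) < (i : ℕ)), c j)
        < c i)
    (P Q : IntervalPartition n) (hQP : Subdivides Q P) :
    (nuP ρ ε c Q d)ᶜ ∪ (nuP ρ ε c Q d ∩ (projP ρ c Q) ⁻¹' (EsetP ρ ε c Q d)) ⊆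
      (nuP ρ ε c P d)ᶜ ∪ (nuP ρ ε c P d ∩ (projP ρ c P) ⁻¹' (EsetP ρ ε c P d)) := by
  intro y hy
  by_cases hP : y ∈ nuP ρ ε c P d
  · by_cases hEP : projP ρ c P y ∈ EsetP ρ ε c P d
    · exact Or.inr ⟨hP, hEP⟩
    · obtain ⟨hQ, hEQ⟩ := key_lemma hd hρ0 hρ1 hε0 hc hsum hQP y hP hEP
      exfalso
      rcases hy with hy | hy
      · exact hy hQ
      · exact hEQ hy.2
  · exact Or.inl hP

end SinhaKnots
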